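/- For any rational a/q with continued fraction expansion of length k, the number of reduced fractions c/d (d > 0) with 0 < a/q − c/d < 1/d² that are not convergents of a/q is at most k. -/

import Mathlib

/-- Value of the continued fraction `[b₀; b₁, …, b_k]`. -/
def cfVal : ℤ → List ℤ → ℚ
  | b0, [] => (b0 : ℚ)
  | b0, b :: bs => (b0 : ℚ) + (cfVal b bs)⁻¹

/-- Numerators of the convergents: `cnum l (j+1) = h_j`, `cnum l 0 = h_{-1} = 1`. -/
def cnum (l : List ℤ) : ℕ → ℤ
  | 0 => 1
  | 1 => l.getD 0 0
  | n + 2 => l.getD (n + 1) 0 * cnum l (n + 1) + cnum l n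

/-- Denominators of the convergents: `cden l (j+1) = k_j`, `cden l 0 = k_{-1} = 0`. -/
def cden (l : List ℤ) : ℕ → ℤ
  | 0 => 0
  | 1 => 1
  | n + 2 => l.getD (n + 1) 0 * cden l (n + 1) + cden l n

/-!
Write `a / q = [b₀; b₁, …, b_k]` with convergents `N_i / K_i` and remainders
`θ_i = q |K_i x - N_i|`, so that `q = K_{i+1} θ_i + K_i θ_{i+1}`. A solution `c / d` has
`m = a d - c q ≥ 1` and `d m < q`. Choose `n` with `K_{n+1} ≤ d < K_{n+2}`; since consecutive
convergents form a unimodular basis, `(c, d) = s (N_{n+1}, K_{n+1}) + t (N_n, K_n)` with `s, t`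
coprime, and `m = ±(s θ_{n+1} - t θ_n)`. Elementary inequalities leave only the convergents and,
for odd `n`, the intermediate fractions with `t = 1` and `s ∈ {1, b_{n+1} - 1}`. There are
`⌊k / 2⌋` odd `n < k`, hence at most `k` solutions that are not convergents.
-/

theorem cnum_add_two (l : List ℤ) (n : ℕ) :
    cnum l (n + 2) = l.getD (n + 1) 0 * cnum l (n + 1) + cnum l n := rfl

theorem cden_add_two (l : List ℤ) (n : ℕ) :
    cden l (n + 2) = l.getD (n + 1) 0 * cden l (n + 1) + cden l n := rfl

theorem cden_cons_succ (b0 : ℤ) (l : List ℤ) : ∀ j, cden (b0 :: l) (j + 1) = cnum l j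
  | 0 => rfl
  | 1 => by simp [cden, cnum]
  | n + 2 => by
    rw [cden_add_two, cnum_add_two, cden_cons_succ b0 l (n + 1), cden_cons_succ b0 l n,
      List.getD_cons_succ]

theorem cnum_cons_succ (b0 : ℤ) (l : List ℤ) :
    ∀ j, cnum (b0 :: l) (j + 1) = b0 * cnum l j + cden l j
  | 0 => by simp [cnum, cden]
  | 1 => by simp [cnum, cden]; ring
  | n + 2 => by
    rw [cnum_add_two (b0 :: l) (n + 1), cnum_add_two l n, cden_add_two l n,
      cnum_cons_succ b0 l (n + 1), cnum_cons_succ b0 l n, List.getD_cons_succ]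
    ring

theorem cnum_mul_cden_sub_cnum_mul_cden (l : List ℤ) :
    ∀ n, cnum l (n + 1) * cden l n - cnum l n * cden l (n + 1) = (-1) ^ (n + 1)
  | 0 => by simp [cnum, cden]
  | n + 1 => by
    rw [cnum_add_two, cden_add_two, pow_succ]
    linear_combination -cnum_mul_cden_sub_cnum_mul_cden l n

theorem List.getD_nonneg {bs : List ℤ} (hpos : ∀ b ∈ bs, 0 ≤ b) (n : ℕ) :
    0 ≤ bs.getD n 0 := by
  rcases lt_or_ge n bs.length with hn | hn
  · rw [List.getD_eq_getElem _ _ hn]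
    exact hpos _ (List.getElem_mem hn)
  · rw [List.getD_eq_default _ _ hn]

theorem List.one_le_getD {bs : List ℤ} (hpos : ∀ b ∈ bs, 1 ≤ b) {n : ℕ}
    (hn : n < bs.length) : 1 ≤ bs.getD n 0 := by
  rw [List.getD_eq_getElem _ _ hn]
  exact hpos _ (List.getElem_mem hn)

theorem cden_nonneg (b0 : ℤ) {bs : List ℤ} (hpos : ∀ b ∈ bs, 0 ≤ b) :
    ∀ j, 0 ≤ cden (b0 :: bs) j
  | 0 => le_rfl
  | 1 => zero_le_one
  | n + 2 => by
    rw [cden_add_two, List.getD_cons_succ]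
    have := cden_nonneg b0 hpos (n + 1)
    have := cden_nonneg b0 hpos n
    have := bs.getD_nonneg hpos n
    positivity

theorem one_le_cden (b0 : ℤ) {bs : List ℤ} (hpos : ∀ b ∈ bs, 1 ≤ b) :
    ∀ j, 1 ≤ j → j ≤ bs.length + 1 → 1 ≤ cden (b0 :: bs) j
  | 1, _, _ => le_rfl
  | n + 2, _, hn => by
    rw [cden_add_two, List.getD_cons_succ]
    have := one_le_cden b0 hpos (n + 1) (by omega) (by omega)
    have := cden_nonneg b0 (fun b hb => zero_le_one.trans (hpos b hb)) n
    have := bs.one_le_getD hpos (n := n) (by omega)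
    nlinarith

theorem cden_le_cden_succ (b0 : ℤ) {bs : List ℤ} (hpos : ∀ b ∈ bs, 1 ≤ b) :
    ∀ n ≤ bs.length, cden (b0 :: bs) n ≤ cden (b0 :: bs) (n + 1)
  | 0, _ => zero_le_one
  | n + 1, hn => by
    rw [cden_add_two, List.getD_cons_succ]
    have := one_le_cden b0 hpos (n + 1) (by omega) (by omega)
    have := cden_nonneg b0 (fun b hb => zero_le_one.trans (hpos b hb)) n
    have := bs.one_le_getD hpos (n := n) (by omega)
    nlinarith

theorem cfVal_eq_cnum_div_cden (b0 : ℤ) {bs : List ℤ} (hpos : ∀ b ∈ bs, 1 ≤ b) :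
    cfVal b0 bs = cnum (b0 :: bs) (bs.length + 1) / cden (b0 :: bs) (bs.length + 1) := by
  induction bs generalizing b0 with
  | nil => simp [cfVal, cnum, cden]
  | cons b1 bs ih =>
    have hN := one_le_cden b0 hpos (bs.length + 2) (by omega) (by simp)
    rw [cden_cons_succ] at hN
    rw [cfVal, ih b1 (fun b hb => hpos b (List.mem_cons_of_mem _ hb)), List.length_cons,
      cnum_cons_succ b0, cden_cons_succ b0]
    push_cast
    field_simp

/-- For `x = a / q` with `a = cnum l (k + 1)`, `q = cden l (k + 1)`, this is `q · |K_j x - N_j|`,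
the remainder sequence `q, a - b₀ q, …` of the Euclidean algorithm on `(a, q)`. -/
def cfRem (l : List ℤ) (k j : ℕ) : ℤ :=
  (-1) ^ (j + 1) * (cnum l (k + 1) * cden l j - cden l (k + 1) * cnum l j)

theorem cfRem_eq_add (l : List ℤ) (k j : ℕ) :
    cfRem l k j = l.getD (j + 1) 0 * cfRem l k (j + 1) + cfRem l k (j + 2) := by
  simp only [cfRem, cnum_add_two, cden_add_two, pow_succ]
  ring

theorem cfRem_self (l : List ℤ) (k : ℕ) : cfRem l k k = 1 := by
  have hsq : ((-1 : ℤ) ^ (k + 1)) ^ 2 = 1 := by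
    rw [← pow_mul, mul_comm, pow_mul, neg_one_sq, one_pow]
  rw [cfRem]
  linear_combination (-1) ^ (k + 1) * cnum_mul_cden_sub_cnum_mul_cden l k + hsq

theorem cfRem_succ_self (l : List ℤ) (k : ℕ) : cfRem l k (k + 1) = 0 := by
  simp [cfRem, mul_comm]

theorem cnum_mul_cden_sub_cden_mul_cnum (l : List ℤ) (k j : ℕ) :
    cnum l (k + 1) * cden l j - cden l (k + 1) * cnum l j = (-1) ^ (j + 1) * cfRem l k j := by
  rw [cfRem, ← mul_assoc, ← pow_add, Even.neg_one_pow ⟨j + 1, rfl⟩, one_mul]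

theorem cden_succ_mul_cfRem_add (l : List ℤ) (k : ℕ) :
    ∀ j, cden l (j + 1) * cfRem l k j + cden l j * cfRem l k (j + 1) = cden l (k + 1)
  | 0 => by simp [cfRem, cnum, cden]
  | j + 1 => by
    rw [cden_add_two]
    linear_combination cden_succ_mul_cfRem_add l k j - cden l (j + 1) * cfRem_eq_add l k j

theorem one_le_cfRem (b0 : ℤ) {bs : List ℤ} (hpos : ∀ b ∈ bs, 1 ≤ b) {j : ℕ}
    (hj : j ≤ bs.length) :
    1 ≤ cfRem (b0 :: bs) bs.length j ∧ 0 ≤ cfRem (b0 :: bs) bs.length (j + 1) := by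
  induction hj using Nat.decreasingInduction with
  | self => simp [cfRem_self, cfRem_succ_self]
  | of_succ j hj ih =>
    rw [cfRem_eq_add, List.getD_cons_succ]
    have := bs.one_le_getD hpos hj
    constructor <;> nlinarith

theorem sub_pos_and_mul_lt_of_approx {a q c d : ℤ} (hq : 0 < q) (hd : 0 < d)
    (h₀ : 0 < (a / q : ℚ) - c / d) (h₁ : (a / q : ℚ) - c / d < 1 / d ^ 2) :
    0 < a * d - c * q ∧ d * (a * d - c * q) < q := by
  have hq' : (0 : ℚ) < q := by exact_mod_cast hq
  have hd' : (0 : ℚ) < d := by exact_mod_cast hd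
  have hsub : (a / q : ℚ) - c / d = ((a * d - c * q : ℤ) : ℚ) / (q * d) := by
    push_cast
    field_simp
  rw [hsub] at h₀ h₁
  rw [div_lt_div_iff₀ (by positivity) (by positivity)] at h₁
  have hm : (0 : ℚ) < (a * d - c * q : ℤ) := (div_pos_iff_of_pos_right (by positivity)).1 h₀
  constructor
  · exact_mod_cast hm
  · have : ((d * (a * d - c * q) : ℤ) : ℚ) < q := by
      push_cast at h₁ hm ⊢
      nlinarith
    exact_mod_cast this

theorem exists_le_lt_succ {u : ℕ → ℤ} {d : ℤ} {k : ℕ} (h₀ : u 0 ≤ d) (hk : d < u k) :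
    ∃ n < k, u n ≤ d ∧ d < u (n + 1) := by
  induction k with
  | zero => exact absurd h₀ (not_le.2 hk)
  | succ k ih =>
    by_cases h : d < u k
    · obtain ⟨n, hn, hle, hlt⟩ := ih h
      exact ⟨n, by omega, hle, hlt⟩
    · exact ⟨k, by omega, not_lt.1 h, hk⟩

theorem exists_eq_mul_add_mul {R : Type*} [CommRing R] {N N' K K' : R}
    (h : IsUnit (N * K' - N' * K)) (c d : R) :
    ∃ s t, c = s * N + t * N' ∧ d = s * K + t * K' := by
  obtain ⟨u, hu⟩ := h
  refine ⟨↑u⁻¹ * (c * K' - d * N'), ↑u⁻¹ * (d * N - c * K), ?_, ?_⟩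
  · linear_combination (-c) * u.inv_mul + ↑u⁻¹ * c * hu
  · linear_combination (-d) * u.inv_mul + ↑u⁻¹ * d * hu

theorem IsCoprime.of_mul_add_mul {R : Type*} [CommRing R] {s t N N' K K' : R}
    (h : IsCoprime (s * N + t * N') (s * K + t * K')) : IsCoprime s t := by
  obtain ⟨u, v, huv⟩ := h
  exact ⟨u * N + v * K, u * N' + v * K', by linear_combination huv⟩

theorem Set.ncard_le_of_forall_odd_lt {α : Type*} {S : Set α} {k : ℕ} (f g : ℕ → α)
    (hS : ∀ p ∈ S, ∃ n, Odd n ∧ n < k ∧ (p = f n ∨ p = g n)) : S.ncard ≤ k := by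
  classical
  let T : Finset α := (Finset.range (k / 2)).image (fun i => f (2 * i + 1)) ∪
    (Finset.range (k / 2)).image (fun i => g (2 * i + 1))
  have hST : S ⊆ T := by
    intro p hp
    obtain ⟨n, ⟨i, rfl⟩, hn, hp⟩ := hS p hp
    have hi : i ∈ Finset.range (k / 2) := Finset.mem_range.2 (by omega)
    rcases hp with rfl | rfl
    · exact Finset.mem_union_left _ (Finset.mem_image_of_mem _ hi)
    · exact Finset.mem_union_right _ (Finset.mem_image_of_mem _ hi)
  calc S.ncard ≤ (T : Set α).ncard := Set.ncard_le_ncard hST T.finite_toSet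
    _ = T.card := Set.ncard_coe_finset T
    _ ≤ (Finset.range (k / 2)).card + (Finset.range (k / 2)).card :=
      (Finset.card_union_le _ _).trans (add_le_add Finset.card_image_le Finset.card_image_le)
    _ ≤ k := by rw [Finset.card_range]; omega

theorem lt_add_of_mul_lt {K K' A B d m : ℤ} (hK : 0 ≤ K) (hKK' : K' ≤ K) (hB : 0 ≤ B)
    (hd : K ≤ d) (hm : 0 ≤ m) (h : d * m < K * A + K' * B) : m < A + B := by
  by_contra! h'
  nlinarith [mul_nonneg (sub_nonneg.2 hd) hm, mul_nonneg hK (sub_nonneg.2 h'),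
    mul_nonneg (sub_nonneg.2 hKK') hB]

theorem lt_of_mul_add_mul_lt {K K' b s t : ℤ} (hK : 0 < K) (hK' : 0 ≤ K') (ht : 1 ≤ t)
    (h : s * K + t * K' < b * K + K') : s < b := by
  have : s * K < b * K := by nlinarith
  exact lt_of_mul_lt_mul_right this hK.le

section Coordinates

/- In the next two lemmas `K' ≤ K` are the denominators `K_n, K_{n+1}`, `A, B, C` the
remainders `θ_n, θ_{n+1}, θ_{n+2}` and `b = b_{n+1}`, so that `A = b B + C` and
`q = K A + K' B`; `(s, t)` are the coordinates of a solution with `K_{n+1} ≤ d < K_{n+2}`,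
whose `a d - c q` is `s B - t A` for even `n` and `t A - s B` for odd `n`. -/

variable {K K' b A B C s t : ℤ}

theorem eq_one_and_eq_zero_of_mul_lt (hK : 0 < K) (hK' : 0 ≤ K') (hKK' : K' ≤ K) (hb : 0 ≤ b)
    (hB : 0 < B) (hC : 0 ≤ C) (hA : A = b * B + C) (hlo : K ≤ s * K + t * K')
    (hhi : s * K + t * K' < b * K + K') (hst : IsCoprime s t) (hm : 0 < s * B - t * A)
    (h : (s * K + t * K') * (s * B - t * A) < K * A + K' * B) : s = 1 ∧ t = 0 := by
  have hA0 : 0 ≤ A := by rw [hA]; positivity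
  have hsum := lt_add_of_mul_lt hK.le hKK' hB.le hlo hm.le h
  rcases lt_trichotomy t 0 with ht | rfl | ht
  · have hs : 1 ≤ s := by
      by_contra! hs
      nlinarith
    nlinarith
  · rcases Int.isUnit_iff.1 (isCoprime_zero_right.1 hst) with hs | hs
    · exact ⟨hs, rfl⟩
    · subst hs
      linarith
  · have hsb := lt_of_mul_add_mul_lt hK hK' ht hhi
    nlinarith

theorem eq_one_and_mem_of_mul_lt (hK : 0 < K) (hK' : 0 ≤ K') (hKK' : K' ≤ K) (hb : 0 ≤ b)
    (hB : 0 < B) (hC : 0 ≤ C) (hA : A = b * B + C) (hlo : K ≤ s * K + t * K')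
    (hhi : s * K + t * K' < b * K + K') (hm : 0 < t * A - s * B)
    (h : (s * K + t * K') * (t * A - s * B) < K * A + K' * B) :
    t = 1 ∧ (s = 0 ∨ s = 1 ∨ s = b - 1) := by
  have hA0 : 0 ≤ A := by rw [hA]; positivity
  have hsum := lt_add_of_mul_lt hK.le hKK' hB.le hlo hm.le h
  rcases lt_trichotomy t 1 with ht | rfl | ht
  · have hs : s ≤ -1 := by
      by_contra! hs
      nlinarith
    nlinarith
  · have hs0 : 0 ≤ s := by
      by_contra! hs
      nlinarith
    have hsb := lt_of_mul_add_mul_lt hK hK' le_rfl hhi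
    refine ⟨rfl, ?_⟩
    by_contra! hs
    have hs2 : 2 ≤ s := by omega
    have hsb2 : s + 2 ≤ b := by omega
    -- `(s K + K') (A - s B) - (K A + K' B) ≥ (s - 2) K B + K' B` as soon as `A ≥ (s + 2) B`
    have hE : 0 ≤ A - (s + 2) * B := by rw [hA]; nlinarith
    nlinarith [mul_nonneg (mul_nonneg (by omega : (0 : ℤ) ≤ s - 1) hK.le) hE,
      mul_nonneg (mul_nonneg (by omega : (0 : ℤ) ≤ s - 2) hK.le) hB.le, mul_nonneg hK' hE]
  · have hsb := lt_of_mul_add_mul_lt hK hK' ht.le hhi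
    nlinarith

end Coordinates

def intermediateFrac (l : List ℤ) (n : ℕ) (s : ℤ) : ℤ × ℤ :=
  (s * cnum l (n + 1) + cnum l n, s * cden l (n + 1) + cden l n)

theorem exists_eq_intermediateFrac_of_approx (b0 : ℤ) {bs : List ℤ}
    (hpos : ∀ b ∈ bs, 1 ≤ b) {c d : ℤ} (hd : 0 < d) (hcd : IsCoprime c d)
    (hm : 0 < cnum (b0 :: bs) (bs.length + 1) * d - c * cden (b0 :: bs) (bs.length + 1))
    (hdm : d * (cnum (b0 :: bs) (bs.length + 1) * d - c * cden (b0 :: bs) (bs.length + 1)) <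
      cden (b0 :: bs) (bs.length + 1))
    (hnc : ∀ i ≤ bs.length, (c, d) ≠ (cnum (b0 :: bs) i, cden (b0 :: bs) i)) :
    ∃ n, Odd n ∧ n < bs.length ∧ ((c, d) = intermediateFrac (b0 :: bs) n 1 ∨
      (c, d) = intermediateFrac (b0 :: bs) n (bs.getD n 0 - 1)) := by
  set l := b0 :: bs
  set k := bs.length
  obtain ⟨n, hnk, hlo, hhi⟩ : ∃ n < k, cden l (n + 1) ≤ d ∧ d < cden l (n + 1 + 1) :=
    exists_le_lt_succ (u := fun i => cden l (i + 1)) hd (by nlinarith)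
  obtain ⟨s, t, rfl, rfl⟩ := exists_eq_mul_add_mul
    ((cnum_mul_cden_sub_cnum_mul_cden l n).symm ▸ isUnit_neg_one.pow (n + 1)) c d
  have hst := hcd.of_mul_add_mul
  have hm_eq : cnum l (k + 1) * (s * cden l (n + 1) + t * cden l n) -
      (s * cnum l (n + 1) + t * cnum l n) * cden l (k + 1) =
      (-1) ^ n * (s * cfRem l k (n + 1) - t * cfRem l k n) := by
    linear_combination s * cnum_mul_cden_sub_cden_mul_cnum l k (n + 1) +
      t * cnum_mul_cden_sub_cden_mul_cnum l k n
  rw [hm_eq, ← cden_succ_mul_cfRem_add l k n] at hdm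
  rw [hm_eq] at hm
  rw [cden_add_two, List.getD_cons_succ] at hhi
  have hA := cfRem_eq_add l k n
  rw [List.getD_cons_succ] at hA
  obtain ⟨hB, hC⟩ := one_le_cfRem b0 hpos (j := n + 1) hnk
  have hK := one_le_cden b0 hpos (n + 1) (by omega) (by omega)
  have hK' := cden_nonneg b0 (fun b hb => zero_le_one.trans (hpos b hb)) n
  have hKK' := cden_le_cden_succ b0 hpos n (by omega)
  have hb := bs.one_le_getD hpos hnk
  rcases Nat.even_or_odd n with hn | hn
  · rw [hn.neg_one_pow, one_mul] at hm hdm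
    obtain ⟨rfl, rfl⟩ :=
      eq_one_and_eq_zero_of_mul_lt hK hK' hKK' (by omega) hB hC hA hlo hhi hst hm (by linarith)
    exact absurd (by simp) (hnc (n + 1) hnk)
  · rw [hn.neg_one_pow, neg_one_mul, neg_sub] at hm hdm
    obtain ⟨rfl, hs⟩ :=
      eq_one_and_mem_of_mul_lt hK hK' hKK' (by omega) hB hC hA hlo hhi hm (by linarith)
    rcases hs with rfl | rfl | rfl
    · exact absurd (by simp) (hnc n hnk.le)
    · exact ⟨n, hn, hnk, Or.inl (by simp [intermediateFrac])⟩
    · exact ⟨n, hn, hnk, Or.inr (by simp [intermediateFrac])⟩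

/-- The number of reduced fractions `c/d` (`d > 0`) with `0 < x - c/d < 1/d²` that are not
convergents `h_j/k_j` (`-1 ≤ j ≤ k - 1`, encoded as indices `i = j + 1 ≤ k`) is at most `k`,
where `x = [b₀; b₁, …, b_k]` and `l = b0 :: bs`, `k = bs.length`. -/
theorem stmt_16 (b0 : ℤ) (bs : List ℤ) (hpos : ∀ b ∈ bs, 1 ≤ b)
    (x : ℚ) (hx : x = cfVal b0 bs) :
    Set.ncard {p : ℤ × ℤ | 0 < p.2 ∧ Int.gcd p.1 p.2 = 1 ∧
        0 < x - (p.1 : ℚ) / p.2 ∧ x - (p.1 : ℚ) / p.2 < 1 / (p.2 : ℚ) ^ 2 ∧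
        ¬∃ i ≤ bs.length,
          (p.1 : ℚ) / p.2 = (cnum (b0 :: bs) i : ℚ) / (cden (b0 :: bs) i : ℚ)} ≤
      bs.length := by
  rw [hx, cfVal_eq_cnum_div_cden b0 hpos]
  refine Set.ncard_le_of_forall_odd_lt (fun n => intermediateFrac (b0 :: bs) n 1)
    (fun n => intermediateFrac (b0 :: bs) n (bs.getD n 0 - 1))
    fun ⟨c, d⟩ ⟨hd, hcd, h₀, h₁, hnc⟩ => ?_
  obtain ⟨hm, hdm⟩ := sub_pos_and_mul_lt_of_approx
    (one_le_cden b0 hpos (bs.length + 1) le_add_self le_rfl) hd h₀ h₁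
  refine exists_eq_intermediateFrac_of_approx b0 hpos hd (Int.isCoprime_iff_gcd_eq_one.2 hcd)
    hm hdm fun i hi hcdi => hnc ⟨i, hi, ?_⟩
  obtain ⟨rfl, rfl⟩ := Prod.mk.inj hcdi
  rfl
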